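/- Let G be a graph, v an avoidable vertex of G that is not contained in any moplex, and M ⊆ V(G)∖{v}. Then M is a moplex of G if and only if M is a moplex of G−v. -/

import Mathlib

open SimpleGraph

namespace MoplexPaper

variable {V : Type*}

/-- Reachability in `G - S`: a walk from `u` to `v` all of whose vertices avoid `S`. -/
def ReachOutside (G : SimpleGraph V) (S : Set V) (u v : V) : Prop :=
  ∃ p : G.Walk u v, ∀ x ∈ p.support, x ∉ S

/-- `S` is a `u,v`-separator. -/
def IsSeparator (G : SimpleGraph V) (u v : V) (S : Set V) : Prop :=
  ¬ G.Adj u v ∧ u ∉ S ∧ v ∉ S ∧ ¬ ReachOutside G S u v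

/-- `S` is a minimal `u,v`-separator. -/
def IsMinSeparator (G : SimpleGraph V) (u v : V) (S : Set V) : Prop :=
  IsSeparator G u v S ∧ ∀ T ⊂ S, ¬ IsSeparator G u v T

/-- `S` is a minimal separator of `G`. -/
def IsMinimalSeparator (G : SimpleGraph V) (S : Set V) : Prop :=
  ∃ u v, u ≠ v ∧ IsMinSeparator G u v S

/-- The (open) neighbourhood of a set of vertices. -/
def setNbhd (G : SimpleGraph V) (X : Set V) : Set V :=
  {v | v ∉ X ∧ ∃ x ∈ X, G.Adj v x}

/-- The closed neighbourhood of a vertex. -/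
def closedNbhd (G : SimpleGraph V) (v : V) : Set V :=
  insert v (G.neighborSet v)

/-- `M` is a module of `G`. -/
def IsModule (G : SimpleGraph V) (M : Set V) : Prop :=
  ∀ v ∉ M, (∀ x ∈ M, G.Adj v x) ∨ (∀ x ∈ M, ¬ G.Adj v x)

/-- `M` is a clique module of `G`. -/
def IsCliqueModule (G : SimpleGraph V) (M : Set V) : Prop :=
  G.IsClique M ∧ IsModule G M

/-- `X` is a moplex of `G`: an inclusion-maximal clique module whose
neighbourhood is empty or a minimal separator. -/
def IsMoplex (G : SimpleGraph V) (X : Set V) : Prop :=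
  X.Nonempty ∧ IsCliqueModule G X ∧
  (∀ Y, X ⊆ Y → IsCliqueModule G Y → Y = X) ∧
  (setNbhd G X = ∅ ∨ IsMinimalSeparator G (setNbhd G X))

/-- A vertex is moplicial if it belongs to a moplex. -/
def Moplicial (G : SimpleGraph V) (v : V) : Prop := ∃ X, IsMoplex G X ∧ v ∈ X

/-- An extension of `v`: an induced `P₃` with midpoint `v`. -/
def IsExtension (G : SimpleGraph V) (v a b : V) : Prop :=
  a ≠ b ∧ G.Adj v a ∧ G.Adj v b ∧ ¬ G.Adj a b

/-- A cycle is induced if the only edges of `G` among its vertices are its own edges. -/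
def IsInducedCycle (G : SimpleGraph V) {w : V} (c : G.Walk w w) : Prop :=
  c.IsCycle ∧ ∀ x ∈ c.support, ∀ y ∈ c.support, G.Adj x y → s(x, y) ∈ c.edges

/-- `v` is avoidable: every extension of `v` is contained in an induced cycle. -/
def Avoidable (G : SimpleGraph V) (v : V) : Prop :=
  ∀ a b, IsExtension G v a b →
    ∃ (w : V) (c : G.Walk w w), IsInducedCycle G c ∧
      a ∈ c.support ∧ v ∈ c.support ∧ b ∈ c.support

/-- `A` is an asteroidal set of `G`. -/
def IsAsteroidal (G : SimpleGraph V) (A : Set V) : Prop :=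
  ∀ a ∈ A, ∀ x ∈ A, ∀ y ∈ A, x ≠ a → y ≠ a →
    ReachOutside G (closedNbhd G a) x y

/-- `G` is AT-free: it has no asteroidal triple. -/
def ATFree (G : SimpleGraph V) : Prop :=
  ¬ ∃ A : Set V, IsAsteroidal G A ∧ A.ncard = 3

/-- `G` has exactly the two moplexes `U` and `W`. -/
def HasExactlyTwoMoplexes (G : SimpleGraph V) (U W : Set V) : Prop :=
  IsMoplex G U ∧ IsMoplex G W ∧ U ≠ W ∧ ∀ X, IsMoplex G X → X = U ∨ X = W

/-- `G` is not complete. -/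
def NonComplete (G : SimpleGraph V) : Prop :=
  ∃ x y : V, x ≠ y ∧ ¬ G.Adj x y

/-!
Avoidability gives arcs: two non-adjacent neighbours of `v` are joined by a path whose inner
vertices avoid `N[v]`. For a clique module `X`, `N(X)` is a minimal separator iff some component
of `G - N(X)` other than `X` sees all of `N(X)`. As `v` is not moplicial, no component of
`G - N[v]` sees every neighbour of `v`: it would be such a full component for the maximal clique
module of `v`, which lies in `N[v]` together with its neighbourhood.

Each step between `G` and `G - v` can fail only in a configuration where the arcs produce such a
component. In this way a clique that is a module of `G - v` is a module of `G`, so `G` and `G - v`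
have the same clique modules avoiding `v`; `insert v M` is not a clique module of `G`, as it would
be a moplex; and a full component of `G - N(M)` survives the deletion of `v`, or is rebuilt from
the arcs, and conversely.
-/

variable {G : SimpleGraph V} {S T M : Set V} {v x y z : V}

/-! ### Reachability outside a set -/

namespace ReachOutside

lemma refl (hx : x ∉ S) : ReachOutside G S x x :=
  ⟨.nil, by simpa using hx⟩

lemma left_notMem (h : ReachOutside G S x y) : x ∉ S :=
  h.elim fun p hp => hp x p.start_mem_support

lemma right_notMem (h : ReachOutside G S x y) : y ∉ S :=
  h.elim fun p hp => hp y p.end_mem_support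

lemma symm (h : ReachOutside G S x y) : ReachOutside G S y x :=
  h.elim fun p hp => ⟨p.reverse, fun u hu => hp u (by simpa using hu)⟩

lemma trans (hxy : ReachOutside G S x y) (hyz : ReachOutside G S y z) :
    ReachOutside G S x z := by
  obtain ⟨p, hp⟩ := hxy
  obtain ⟨q, hq⟩ := hyz
  refine ⟨p.append q, fun u hu => ?_⟩
  rcases Walk.mem_support_append_iff p q |>.1 hu with hu | hu
  exacts [hp u hu, hq u hu]

lemma of_adj (h : G.Adj x y) (hx : x ∉ S) (hy : y ∉ S) : ReachOutside G S x y :=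
  ⟨.cons h .nil, by simp [hx, hy]⟩

lemma mono (hTS : T ⊆ S) (h : ReachOutside G S x y) : ReachOutside G T x y :=
  h.elim fun p hp => ⟨p, fun u hu huT => hp u hu (hTS huT)⟩

lemma of_mem_support (p : G.Walk x y) (hp : ∀ u ∈ p.support, u ∉ S) {u : V}
    (hu : u ∈ p.support) : ReachOutside G S x u := by
  classical
  exact ⟨p.takeUntil u hu, fun w hw => hp w (p.support_takeUntil_subset_support hu hw)⟩

lemma mem_of_forall_adj {A : Set V} (hA : ∀ a ∈ A, a ∉ S → ∀ b, G.Adj a b → b ∈ A ∪ S)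
    (hx : x ∈ A) (h : ReachOutside G S x y) : y ∈ A := by
  obtain ⟨p, hp⟩ := h
  induction p with
  | nil => exact hx
  | @cons a b c hab q ih =>
    refine ih ?_ fun u hu => hp u (by simp [hu])
    exact (hA a hx (hp a (by simp)) b hab).resolve_right (hp b (by simp))

lemma union_or (h : ReachOutside G S x y) (T : Set V) :
    ReachOutside G (S ∪ T) x y ∨ ∃ t ∈ T, ReachOutside G S x t := by
  obtain ⟨p, hp⟩ := h
  by_cases hT : ∃ t ∈ p.support, t ∈ T
  · obtain ⟨t, ht, htT⟩ := hT
    exact .inr ⟨t, htT, of_mem_support p hp ht⟩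
  · push Not at hT
    exact .inl ⟨p, fun u hu huST => huST.elim (hp u hu) (hT u hu)⟩

lemma union_of_forall (h : ReachOutside G S x y) (hT : ∀ u, ReachOutside G S x u → u ∉ T) :
    ReachOutside G (S ∪ T) x y := by
  obtain ⟨p, hp⟩ := h
  exact ⟨p, fun u hu huST => huST.elim (hp u hu) (hT u (of_mem_support p hp hu))⟩

end ReachOutside

/-- `w` has a neighbour in the component of `b` in `G - S`. -/
def AdjComponent (G : SimpleGraph V) (S : Set V) (b w : V) : Prop :=
  ∃ y, ReachOutside G S b y ∧ G.Adj w y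

lemma AdjComponent.mono {w : V} (hTS : T ⊆ S) (h : AdjComponent G S x w) :
    AdjComponent G T x w :=
  h.elim fun y hy => ⟨y, hy.1.mono hTS, hy.2⟩

lemma AdjComponent.of_reachOutside {w : V} (hxy : ReachOutside G S x y)
    (h : AdjComponent G S y w) : AdjComponent G S x w :=
  h.elim fun z hz => ⟨z, hxy.trans hz.1, hz.2⟩

lemma reachOutside_or_exists_adjComponent (p : G.Walk x y) (hx : x ∉ S) :
    ReachOutside G S x y ∨ ∃ s ∈ p.support, s ∈ S ∧ AdjComponent G S x s := by
  induction p with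
  | nil => exact .inl (.refl hx)
  | @cons a b c hab q ih =>
    by_cases hb : b ∈ S
    · exact .inr ⟨b, by simp, hb, a, .refl hx, hab.symm⟩
    · have hab' : ReachOutside G S a b := .of_adj hab hx hb
      rcases ih hb with h | ⟨s, hs, hsS, hadj⟩
      · exact .inl (hab'.trans h)
      · exact .inr ⟨s, by simp [hs], hsS, hadj.of_reachOutside hab'⟩

/-! ### Moplexes and full components -/

lemma IsModule.adj_of_adj (hM : IsModule G M) {u : V} (hu : u ∉ M) (hx : x ∈ M)
    (hux : G.Adj u x) (hy : y ∈ M) : G.Adj u y :=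
  (hM u hu).elim (fun h => h y hy) fun h => absurd hux (h x hx)

lemma IsModule.adj_of_mem_setNbhd (hM : IsModule G M) {u : V} (hu : u ∈ setNbhd G M)
    (hy : y ∈ M) : G.Adj u y :=
  hu.2.elim fun _ hx => hM.adj_of_adj hu.1 hx.1 hx.2 hy

lemma IsModule.setNbhd_subset_neighborSet (hM : IsModule G M) (hv : v ∈ M) :
    setNbhd G M ⊆ G.neighborSet v :=
  fun _ hw => (hM.adj_of_mem_setNbhd hw hv).symm

lemma mem_of_reachOutside_setNbhd (hx : x ∈ M) (h : ReachOutside G (setNbhd G M) x y) : y ∈ M :=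
  h.mem_of_forall_adj (fun a ha _ b hab => by
    by_cases hb : b ∈ M
    · exact .inl hb
    · exact .inr ⟨hb, a, ha, hab.symm⟩) hx

def HasFullComponent (G : SimpleGraph V) (X : Set V) : Prop :=
  ∃ b ∉ X, b ∉ setNbhd G X ∧ ∀ s ∈ setNbhd G X, AdjComponent G (setNbhd G X) b s

lemma IsSeparator.symm {p q : V} (h : IsSeparator G p q S) : IsSeparator G q p S :=
  ⟨fun hqp => h.1 hqp.symm, h.2.2.1, h.2.1, fun hr => h.2.2.2 hr.symm⟩

lemma IsMinSeparator.symm {p q : V} (h : IsMinSeparator G p q S) : IsMinSeparator G q p S :=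
  ⟨h.1.symm, fun T hT hsep => h.2 T hT hsep.symm⟩

lemma IsMinSeparator.adjComponent {p q s : V} (h : IsMinSeparator G p q S) (hs : s ∈ S) :
    AdjComponent G S p s := by
  have hS : S \ {s} ⊂ S := Set.sdiff_singleton_ssubset.2 hs
  obtain ⟨⟨hpq, hp, hq, hsep⟩, hmin⟩ := h
  have hreach : ReachOutside G (S \ {s}) p q := by
    by_contra hr
    exact hmin _ hS ⟨hpq, fun h => hp h.1, fun h => hq h.1, hr⟩
  obtain ⟨w, hw⟩ := hreach
  rcases reachOutside_or_exists_adjComponent w hp with hr | ⟨s', hs'w, hs'S, hadj⟩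
  · exact absurd hr hsep
  · obtain rfl : s' = s := by_contra fun hne => hw s' hs'w ⟨hs'S, hne⟩
    exact hadj

lemma isMinimalSeparator_setNbhd_iff (hM : IsCliqueModule G M) (hne : M.Nonempty) :
    IsMinimalSeparator G (setNbhd G M) ↔ HasFullComponent G M := by
  constructor
  · rintro ⟨p, q, hpq, hmin⟩
    by_cases hpM : p ∈ M
    · have hqM : q ∉ M := fun hqM => hmin.1.1 (hM.1 hpM hqM hpq)
      exact ⟨q, hqM, hmin.1.2.2.1, fun s hs => hmin.symm.adjComponent hs⟩
    · exact ⟨p, hpM, hmin.1.2.1, fun s hs => hmin.adjComponent hs⟩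
  · rintro ⟨b, hbM, hbN, hfull⟩
    obtain ⟨x, hx⟩ := hne
    have hxN : x ∉ setNbhd G M := fun h => h.1 hx
    refine ⟨x, b, fun h => hbM (h ▸ hx),
      ⟨fun hxb => hbN ⟨hbM, x, hx, hxb.symm⟩, hxN, hbN,
        fun hr => hbM (mem_of_reachOutside_setNbhd hx hr)⟩, ?_⟩
    rintro T hT ⟨-, -, -, hsep⟩
    obtain ⟨s, hsN, hsT⟩ := Set.exists_of_ssubset hT
    obtain ⟨y, hby, hsy⟩ := hfull s hsN
    have hxT : x ∉ T := fun h => hxN (hT.1 h)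
    have hyT : y ∉ T := fun h => hby.right_notMem (hT.1 h)
    exact hsep <| (ReachOutside.of_adj (hM.2.adj_of_mem_setNbhd hsN hx).symm hxT hsT).trans <|
      (ReachOutside.of_adj hsy hsT hyT).trans (hby.symm.mono hT.1)

lemma isMoplex_iff_hasFullComponent :
    IsMoplex G M ↔ M.Nonempty ∧ IsCliqueModule G M ∧
      (∀ Y, M ⊆ Y → IsCliqueModule G Y → Y = M) ∧
      (setNbhd G M = ∅ ∨ HasFullComponent G M) := by
  refine ⟨fun ⟨hne, hM, hmax, hsep⟩ => ⟨hne, hM, hmax, ?_⟩,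
    fun ⟨hne, hM, hmax, hsep⟩ => ⟨hne, hM, hmax, ?_⟩⟩
  · exact hsep.imp_right (isMinimalSeparator_setNbhd_iff hM hne).1
  · exact hsep.imp_right (isMinimalSeparator_setNbhd_iff hM hne).2

lemma isCliqueModule_singleton (v : V) : IsCliqueModule G {v} := by
  refine ⟨isClique_singleton v, fun u _ => ?_⟩
  by_cases h : G.Adj u v
  · exact .inl (by simpa using h)
  · exact .inr (by simpa using h)

lemma IsCliqueModule.adj_of_mem {A B : Set V} (hA : IsCliqueModule G A)
    (hB : IsCliqueModule G B) (hvA : v ∈ A) (hvB : v ∈ B) (hx : x ∈ A) (hy : y ∈ B)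
    (hxy : x ≠ y) : G.Adj x y := by
  by_cases hxB : x ∈ B
  · exact hB.1 hxB hy hxy
  · have hxv : x ≠ v := fun h => hxB (h ▸ hvB)
    exact hB.2.adj_of_adj hxB hvB (hA.1 hx hvA hxv) hy

lemma IsCliqueModule.subset_closedNbhd (hM : IsCliqueModule G M) (hv : v ∈ M) :
    M ⊆ closedNbhd G v := by
  intro x hx
  by_cases hxv : x = v
  · exact hxv ▸ Set.mem_insert x _
  · exact Set.mem_insert_of_mem v (hM.1 hv hx (Ne.symm hxv))

lemma IsCliqueModule.exists_adj_of_not_isCliqueModule_insert (hM : IsCliqueModule G M)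
    (hvS : v ∈ setNbhd G M) (hSN : setNbhd G M ⊆ closedNbhd G v)
    (hnot : ¬ IsCliqueModule G (insert v M)) : ∃ z ∉ M, G.Adj v z ∧ z ∉ setNbhd G M := by
  have hvM : ∀ x ∈ M, G.Adj v x := fun x hx => hM.2.adj_of_mem_setNbhd hvS hx
  have hnmod : ¬ IsModule G (insert v M) := fun h => hnot ⟨hM.1.insert fun x hx _ => hvM x hx, h⟩
  simp only [IsModule, not_forall, not_or, not_not, Set.mem_insert_iff, exists_prop] at hnmod
  obtain ⟨z, hz, hall, hnone⟩ := hnmod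
  push Not at hz
  rcases hM.2 z hz.2 with hzM | hzM
  · obtain ⟨m, hm, -⟩ := hvS.2
    have hvz := (Set.mem_insert_iff.1 (hSN ⟨hz.2, m, hm, hzM m hm⟩)).resolve_left hz.1
    obtain ⟨x, rfl | hx, hzx⟩ := hall
    exacts [absurd hvz.symm hzx, absurd (hzM x hx) hzx]
  · obtain ⟨x, rfl | hx, hzx⟩ := hnone
    exacts [⟨z, hz.2, hzx.symm, fun ⟨_, y, hy, hzy⟩ => hzM y hy hzy⟩, absurd hzx (hzM x hx)]

lemma setNbhd_insert (hA : IsModule G (insert v M)) (hne : M.Nonempty) :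
    setNbhd G (insert v M) = setNbhd G M \ {v} := by
  obtain ⟨m, hm⟩ := hne
  ext u
  constructor
  · rintro ⟨hu, x, hx, hux⟩
    have huv : u ≠ v := fun h => hu (h ▸ Set.mem_insert v M)
    exact ⟨⟨fun h => hu (.inr h), m, hm, hA.adj_of_adj hu hx hux (.inr hm)⟩, huv⟩
  · rintro ⟨⟨huM, x, hx, hux⟩, huv⟩
    refine ⟨?_, x, .inr hx, hux⟩
    rintro (h | h)
    exacts [huv h, huM h]

def maxCliqueModule (G : SimpleGraph V) (v : V) : Set V :=
  ⋃₀ {A | IsCliqueModule G A ∧ v ∈ A}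

lemma subset_maxCliqueModule (hM : IsCliqueModule G M) (hv : v ∈ M) :
    M ⊆ maxCliqueModule G v :=
  Set.subset_sUnion_of_mem ⟨hM, hv⟩

lemma mem_maxCliqueModule (G : SimpleGraph V) (v : V) : v ∈ maxCliqueModule G v :=
  subset_maxCliqueModule (isCliqueModule_singleton v) rfl rfl

lemma isCliqueModule_maxCliqueModule (G : SimpleGraph V) (v : V) :
    IsCliqueModule G (maxCliqueModule G v) := by
  refine ⟨?_, fun z hz => ?_⟩
  · rintro x ⟨A, ⟨hA, hvA⟩, hxA⟩ y ⟨B, ⟨hB, hvB⟩, hyB⟩ hxy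
    exact hA.adj_of_mem hB hvA hvB hxA hyB hxy
  · have hzA : ∀ A, IsCliqueModule G A → v ∈ A → z ∉ A := fun A hA hvA hzA =>
      hz ⟨A, ⟨hA, hvA⟩, hzA⟩
    by_cases hzv : G.Adj z v
    · refine .inl ?_
      rintro x ⟨A, ⟨hA, hvA⟩, hxA⟩
      exact hA.2.adj_of_adj (hzA A hA hvA) hvA hzv hxA
    · refine .inr ?_
      rintro x ⟨A, ⟨hA, hvA⟩, hxA⟩ hzx
      exact hzv (hA.2.adj_of_adj (hzA A hA hvA) hxA hzx hvA)

/-- The maximal clique module `X` of `v` satisfies `X ∪ N(X) ⊆ N[v]`, so the component of `b`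
in `G - N[v]` is a full component for `X`. -/
lemma moplicial_of_forall_adjComponent {b : V} (hb : b ∉ closedNbhd G v)
    (h : ∀ w, G.Adj v w → AdjComponent G (closedNbhd G v) b w) : Moplicial G v := by
  set X := maxCliqueModule G v
  have hX := isCliqueModule_maxCliqueModule G v
  have hvX := mem_maxCliqueModule G v
  have hN : setNbhd G X ⊆ closedNbhd G v :=
    (hX.2.setNbhd_subset_neighborSet hvX).trans (Set.subset_insert _ _)
  refine ⟨X, isMoplex_iff_hasFullComponent.2 ⟨⟨v, hvX⟩, hX, fun Y hXY hY => ?_, .inr ?_⟩, hvX⟩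
  · exact (subset_maxCliqueModule hY (hXY hvX)).antisymm hXY
  · exact ⟨b, fun h => hb (hX.subset_closedNbhd hvX h), fun h => hb (hN h),
      fun s hs => (h s (hX.2.adj_of_mem_setNbhd hs hvX).symm).mono hN⟩

/-! ### Arcs at an avoidable vertex -/

lemma IsInducedCycle.rotate [DecidableEq V] {u w : V} {c : G.Walk w w}
    (hc : IsInducedCycle G c) (hu : u ∈ c.support) : IsInducedCycle G (c.rotate u hu) := by
  refine ⟨hc.1.rotate hu, fun a ha b hb hab => ?_⟩
  rw [Walk.mem_support_rotate_iff] at ha hb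
  exact (c.rotate_edges u hu).perm.mem_iff.2 (hc.2 a ha b hb hab)

lemma IsInducedCycle.eq_snd_or_eq_penultimate {u : V} {c : G.Walk v v}
    (hc : IsInducedCycle G c) (hu : u ∈ c.support) (hvu : G.Adj v u) :
    u = c.snd ∨ u = c.tail.penultimate := by
  have he := hc.2 v c.start_mem_support u hu hvu
  rw [← c.cons_tail_eq hc.1.not_nil, Walk.edges_cons, List.mem_cons] at he
  rcases he with he | he
  · exact .inl (Sym2.congr_right.1 he)
  · exact .inr (hc.1.isPath_tail.eq_penultimate_of_mem_edges he)

/-- The rest of the cycle joins the two cycle-neighbours of `v`; as the cycle is induced, its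
inner vertices avoid `N[v]`. -/
lemma IsInducedCycle.exists_arc {c : G.Walk v v} (hc : IsInducedCycle G c)
    (hnadj : ¬ G.Adj c.snd c.tail.penultimate) :
    ∃ y z, G.Adj c.snd y ∧ ReachOutside G (closedNbhd G v) y z ∧
      G.Adj z c.tail.penultimate := by
  have hnil := hc.1.not_nil
  have hpath := hc.1.isPath_tail
  have hlen := Walk.length_tail_add_one hnil ▸ hc.1.three_le_length
  have htnil : ¬ c.tail.Nil := fun h => by rw [h.length_eq_zero] at hlen; omega
  have hcons := c.tail.cons_tail_eq htnil
  have hsy := c.tail.adj_snd htnil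
  have hqc : ∀ u ∈ c.tail.tail.support, u ∈ c.support := fun u hu => by
    rw [Walk.support_tail_of_not_nil _ htnil, Walk.support_tail_of_not_nil _ hnil] at hu
    exact List.mem_of_mem_tail (List.mem_of_mem_tail hu)
  have hsnd : c.snd ∉ c.tail.tail.support := by
    have := hpath.support_nodup
    rw [← hcons, Walk.support_cons] at this
    exact (List.nodup_cons.1 this).1
  have hyv : c.tail.snd ≠ v := fun hyv => by
    have he : s(c.snd, v) ∈ c.tail.edges := by
      rw [← hcons, Walk.edges_cons]
      exact List.mem_cons.2 (.inl (by rw [hyv]))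
    have := hpath.length_eq_one_of_mem_edges he
    omega
  have hy : c.tail.snd ∉ closedNbhd G v := by
    rintro (hyv' | hvy)
    · exact hyv hyv'
    · rcases hc.eq_snd_or_eq_penultimate (hqc _ c.tail.tail.start_mem_support) hvy with h | h
      · exact G.irrefl (h ▸ hsy)
      · exact hnadj (h ▸ hsy)
  rcases reachOutside_or_exists_adjComponent c.tail.tail hy with hr | ⟨s, hsq, hsN, z, hyz, hsz⟩
  · exact absurd (Set.mem_insert v _) hr.right_notMem
  have hvs : G.Adj v s := by
    rcases hsN with rfl | hvs
    · exact absurd (Set.mem_insert_of_mem _ hsz) hyz.right_notMem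
    · exact hvs
  rcases hc.eq_snd_or_eq_penultimate (hqc s hsq) hvs with rfl | rfl
  · exact absurd hsq hsnd
  · exact ⟨_, z, hsy, hyz, hsz.symm⟩

lemma Avoidable.exists_arc {a b : V} (hav : Avoidable G v) (hext : IsExtension G v a b) :
    ∃ y z, G.Adj a y ∧ ReachOutside G (closedNbhd G v) y z ∧ G.Adj z b := by
  classical
  obtain ⟨w, c, hc, ha, hv, hb⟩ := hav a b hext
  obtain ⟨hab, hva, hvb, hnadj⟩ := hext
  have hc' := hc.rotate hv
  rw [← c.mem_support_rotate_iff v hv] at ha hb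
  rcases hc'.eq_snd_or_eq_penultimate ha hva with rfl | rfl <;>
    rcases hc'.eq_snd_or_eq_penultimate hb hvb with rfl | rfl
  · exact absurd rfl hab
  · exact hc'.exists_arc hnadj
  · obtain ⟨y, z, hay, hyz, hzb⟩ := hc'.exists_arc fun h => hnadj h.symm
    exact ⟨z, y, hzb.symm, hyz.symm, hay.symm⟩
  · exact absurd rfl hab

/-- An arc from `w` to `u` either meets `T`, and then `w` sees the component of `m` in
`G - N[v]`, or it avoids `T`. -/
lemma Avoidable.adjComponent_insert (hav : Avoidable G v) {m w u : V}
    (hm : m ∉ closedNbhd G v) (hT : ∀ t ∈ T, G.Adj m t) (hwT : w ∉ T) (hvw : G.Adj v w)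
    (hvu : G.Adj v u) (huw : u ≠ w) (hw : ¬ AdjComponent G (closedNbhd G v) m w) :
    AdjComponent G (insert v T) w u := by
  have hwN : w ∉ insert v T := by
    rintro (h | h)
    exacts [hvw.ne' h, hwT h]
  by_cases hwu : G.Adj w u
  · exact ⟨w, .refl hwN, hwu.symm⟩
  obtain ⟨y, z, hwy, hyz, hzu⟩ := hav.exists_arc ⟨huw.symm, hvw, hvu, hwu⟩
  rcases hyz.union_or T with hyz | ⟨t, htT, hyt⟩
  · have hyz := hyz.mono <|
      Set.insert_subset_iff.2 ⟨.inl (Set.mem_insert v _), Set.subset_union_right⟩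
    exact ⟨z, (ReachOutside.of_adj hwy hwN hyz.left_notMem).trans hyz, hzu.symm⟩
  · exact absurd ⟨y, (ReachOutside.of_adj (hT t htT) hm hyt.right_notMem).trans hyt.symm, hwy⟩ hw

lemma Avoidable.adjComponent_of_subset_closedNbhd (hav : Avoidable G v) {s : V}
    (hS : S ⊆ closedNbhd G v) (hzS : z ∉ S) (hvz : G.Adj v z) (hs : s ∈ S) :
    AdjComponent G S z s := by
  by_cases hsv : s = v
  · subst hsv
    exact ⟨z, .refl hzS, hvz⟩
  have hvs : G.Adj v s := (Set.mem_insert_iff.1 (hS hs)).resolve_left hsv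
  by_cases hzs : G.Adj z s
  · exact ⟨z, .refl hzS, hzs.symm⟩
  obtain ⟨y, y', hzy, hyy', hy's⟩ :=
    hav.exists_arc ⟨(ne_of_mem_of_not_mem hs hzS).symm, hvz, hvs, hzs⟩
  have hyy' := hyy'.mono hS
  exact ⟨y', (ReachOutside.of_adj hzy hzS hyy'.left_notMem).trans hyy', hy's.symm⟩

/-! ### Deleting an avoidable non-moplicial vertex -/

/-- Otherwise `v` has a neighbour `a` and a non-neighbour `b` in `Y`, and the arcs from `a` to the
neighbours of `v` outside `Y` make the component of `b` in `G - N[v]` see all of `N(v)`. -/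
lemma Avoidable.isModule_of_forall_ne (hav : Avoidable G v) (hnm : ¬ Moplicial G v)
    {Y : Set V} (hvY : v ∉ Y) (hY : G.IsClique Y)
    (hmod : ∀ u ∉ Y, u ≠ v → (∀ x ∈ Y, G.Adj u x) ∨ ∀ x ∈ Y, ¬ G.Adj u x) : IsModule G Y := by
  intro u huY
  rcases eq_or_ne v u with rfl | hvu
  swap
  · exact hmod u huY hvu.symm
  by_contra hmix
  push Not at hmix
  obtain ⟨⟨b, hbY, hvb⟩, a, haY, hva⟩ := hmix
  have hbN : b ∉ closedNbhd G v := by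
    rintro (h | h)
    exacts [hvY (h ▸ hbY), hvb h]
  refine hnm (moplicial_of_forall_adjComponent hbN fun w hvw => ?_)
  by_cases hwY : w ∈ Y
  · exact ⟨b, .refl hbN, hY hwY hbY fun h => hvb (h ▸ hvw)⟩
  rcases hmod w hwY hvw.ne' with hall | hnone
  · exact ⟨b, .refl hbN, hall b hbY⟩
  obtain ⟨y, z, hay, hyz, hzw⟩ := hav.exists_arc
    ⟨ne_of_mem_of_not_mem haY hwY, hva, hvw, fun h => hnone a haY h.symm⟩
  have hyN := hyz.left_notMem
  have hby : ReachOutside G (closedNbhd G v) b y := by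
    by_cases hyb : y = b
    · subst hyb
      exact .refl hbN
    refine .of_adj ?_ hbN hyN
    by_cases hyY : y ∈ Y
    · exact hY hbY hyY (Ne.symm hyb)
    · have hyv : y ≠ v := fun h => hyN (h ▸ Set.mem_insert y _)
      exact (((hmod y hyY hyv).resolve_right fun h => h a haY hay.symm) b hbY).symm
  exact ⟨z, hby.trans hyz, hzw.symm⟩

lemma Avoidable.isCliqueModule_sdiff_singleton (hav : Avoidable G v) (hnm : ¬ Moplicial G v)
    {Y : Set V} (hY : IsCliqueModule G Y) : IsCliqueModule G (Y \ {v}) := by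
  refine ⟨hY.1.subset Set.sdiff_subset, hav.isModule_of_forall_ne hnm (by simp)
    (hY.1.subset Set.sdiff_subset) fun u hu huv => ?_⟩
  have huY : u ∉ Y := fun h => hu ⟨h, huv⟩
  exact (hY.2 u huY).imp (fun h x hx => h x hx.1) (fun h x hx => h x hx.1)

/-- Otherwise some neighbour `w` of `v` misses the component of `M` in `G - N[v]`. The arcs from
`w` then reach every neighbour of `v` outside `N(M)`, hence all of the full component of `v` in
`G - N(M)` except `v`, so the component of `w` in `G - v - N(M)` is full. -/
lemma Avoidable.exists_full_of_adjComponent (hav : Avoidable G v) (hnm : ¬ Moplicial G v)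
    {m : V} (hM : IsModule G M) (hm : m ∈ M) (hvM : v ∉ M) (hvS : v ∉ setNbhd G M)
    (hv : ∀ s ∈ setNbhd G M, AdjComponent G (setNbhd G M) v s) :
    ∃ d ∉ M, d ∉ insert v (setNbhd G M) ∧
      ∀ s ∈ setNbhd G M, AdjComponent G (insert v (setNbhd G M)) d s := by
  set S := setNbhd G M
  by_contra hno
  have hmN : m ∉ closedNbhd G v := by
    rintro (h | h)
    exacts [hvM (h ▸ hm), hvS ⟨hvM, m, hm, h⟩]
  have hT : ∀ t ∈ S, G.Adj m t := fun t ht => (hM.adj_of_mem_setNbhd ht hm).symm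
  refine hnm (moplicial_of_forall_adjComponent hmN fun w hvw => ?_)
  by_contra hw
  have hwS : w ∉ S := fun hwS => hw ⟨m, .refl hmN, hM.adj_of_mem_setNbhd hwS hm⟩
  have hwN : w ∉ insert v S := by
    rintro (h | h)
    exacts [hvw.ne' h, hwS h]
  have hreach : ∀ u, G.Adj v u → u ∉ S → ReachOutside G (insert v S) w u := by
    intro u hvu huS
    by_cases huw : u = w
    · subst huw
      exact .refl hwN
    obtain ⟨d, hwd, hud⟩ := hav.adjComponent_insert hmN hT hwS hvw hvu huw hw
    refine hwd.trans (.of_adj hud.symm hwd.right_notMem ?_)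
    rintro (h | h)
    exacts [hvu.ne' h, huS h]
  refine hno ⟨w, fun hwM => hvS ⟨hvM, w, hwM, hvw⟩, hwN, fun s hs => ?_⟩
  obtain ⟨x, hvx, hsx⟩ := hv s hs
  by_cases hxv : x = v
  · subst hxv
    exact hav.adjComponent_insert hmN hT hwS hvw hsx.symm (ne_of_mem_of_not_mem hs hwS) hw
  obtain ⟨p, hp⟩ := hvx.symm
  have hxN : x ∉ insert v S := by
    rintro (h | h)
    exacts [hxv h, hvx.right_notMem h]
  rcases reachOutside_or_exists_adjComponent p hxN with hr | ⟨s', hs'p, hs'N, z, hxz, hs'z⟩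
  · exact absurd (Set.mem_insert v S) hr.right_notMem
  obtain rfl : s' = v := (Set.mem_insert_iff.1 hs'N).resolve_right (hp s' hs'p)
  have hzS : z ∉ S := fun h => hxz.right_notMem (Set.mem_insert_of_mem _ h)
  exact ⟨x, (hreach z hs'z hzS).trans hxz.symm, hsx⟩

/-- The component `C` of `b` in `G - N(M)` avoids `N[v]`, and the component of `s₁` in
`G - N[v]`, which contains `C`, sees all of `N(v)`. -/
lemma Avoidable.moplicial_of_not_adjComponent (hav : Avoidable G v) {m b s₁ : V}
    (hM : IsModule G M) (hm : m ∈ M) (hvS : v ∈ setNbhd G M) (hs₁ : s₁ ∈ setNbhd G M)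
    (hs₁N : s₁ ∉ closedNbhd G v) (hbv : ¬ AdjComponent G (setNbhd G M) b v)
    (hb : ∀ s ∈ setNbhd G M, s ≠ v → AdjComponent G (setNbhd G M) b s) : Moplicial G v := by
  set S := setNbhd G M
  have hC : ∀ x, ReachOutside G S b x → ReachOutside G (closedNbhd G v) b x := by
    refine fun x hbx => (hbx.union_of_forall fun u hbu hu => ?_).mono Set.subset_union_right
    rcases hu with rfl | hvu
    exacts [hbu.right_notMem hvS, hbv ⟨u, hbu, hvu⟩]
  have hs₁v : s₁ ≠ v := fun h => hs₁N (h ▸ Set.mem_insert _ _)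
  obtain ⟨x₁, hbx₁, hs₁x₁⟩ := hb s₁ hs₁ hs₁v
  have hs₁b : ReachOutside G (closedNbhd G v) s₁ b :=
    (ReachOutside.of_adj hs₁x₁ hs₁N (hC x₁ hbx₁).right_notMem).trans (hC x₁ hbx₁).symm
  have hS : ∀ s ∈ S, s ≠ v → AdjComponent G (closedNbhd G v) s₁ s := fun s hs hsv =>
    (hb s hs hsv).elim fun x hx => ⟨x, hs₁b.trans (hC x hx.1), hx.2⟩
  have hvM : ∀ x ∈ M, G.Adj v x := fun x hx => hM.adj_of_mem_setNbhd hvS hx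
  refine moplicial_of_forall_adjComponent hs₁N fun w hvw => ?_
  by_cases hwM : w ∈ M
  · exact ⟨s₁, .refl hs₁N, (hM.adj_of_mem_setNbhd hs₁ hwM).symm⟩
  by_cases hwS : w ∈ S
  · exact hS w hwS hvw.ne'
  obtain ⟨y, z, hmy, hyz, hzw⟩ := hav.exists_arc
    ⟨ne_of_mem_of_not_mem hm hwM, hvM m hm, hvw, fun h => hwS ⟨hwM, m, hm, h.symm⟩⟩
  have hyN := hyz.left_notMem
  have hyS : y ∈ S := ⟨fun hyM => hyN (Set.mem_insert_of_mem v (hvM y hyM)), m, hm, hmy.symm⟩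
  obtain ⟨x, hs₁x, hyx⟩ := hS y hyS fun h => hyN (h ▸ Set.mem_insert y _)
  exact ⟨z, (hs₁x.trans (.of_adj hyx.symm hs₁x.right_notMem hyN)).trans hyz, hzw.symm⟩

abbrev deleteVert (G : SimpleGraph V) (v : V) : SimpleGraph {x : V // x ≠ v} :=
  G.comap Subtype.val

lemma reachOutside_deleteVert_iff {x y : {x : V // x ≠ v}} :
    ReachOutside (deleteVert G v) (Subtype.val ⁻¹' S) x y ↔ ReachOutside G (insert v S) x y := by
  constructor
  · rintro ⟨p, hp⟩
    refine ⟨p.map ⟨Subtype.val, id⟩, fun u hu => ?_⟩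
    obtain ⟨u', hu', rfl⟩ := List.mem_map.1 (Walk.support_map _ p ▸ hu)
    exact fun h => h.elim u'.2 (hp u' hu')
  · rintro ⟨p, hp⟩
    have hpv : ∀ u ∈ p.support, u ∈ ({v}ᶜ : Set V) := fun u hu huv =>
      hp u hu (huv ▸ Set.mem_insert v S)
    let q : (G.induce {v}ᶜ).Walk ⟨x, x.2⟩ ⟨y, y.2⟩ := p.induce {v}ᶜ hpv
    have hq : ∀ u ∈ q.support, (u : V) ∈ p.support := fun u hu => by
      rw [Walk.support_induce, List.mem_attachWith] at hu
      exact hu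
    exact ⟨q, fun u hu huS => hp u (hq u hu) (Set.mem_insert_of_mem v huS)⟩

lemma adjComponent_deleteVert_iff {b w : {x : V // x ≠ v}} :
    AdjComponent (deleteVert G v) (Subtype.val ⁻¹' S) b w ↔ AdjComponent G (insert v S) b w := by
  constructor
  · rintro ⟨y, hby, hwy⟩
    exact ⟨y, reachOutside_deleteVert_iff.1 hby, hwy⟩
  · rintro ⟨y, hby, hwy⟩
    have hyv : y ≠ v := fun h => hby.right_notMem (h ▸ Set.mem_insert v S)
    exact ⟨⟨y, hyv⟩, reachOutside_deleteVert_iff.2 hby, hwy⟩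

lemma setNbhd_deleteVert (hvM : v ∉ M) :
    setNbhd (deleteVert G v) (Subtype.val ⁻¹' M) = Subtype.val ⁻¹' setNbhd G M := by
  ext u
  refine ⟨fun ⟨huM, x, hx, hux⟩ => ⟨huM, x, hx, hux⟩, fun ⟨huM, x, hx, hux⟩ => ?_⟩
  exact ⟨huM, ⟨x, ne_of_mem_of_not_mem hx hvM⟩, hx, hux⟩

lemma setNbhd_deleteVert_eq_empty_iff (hvM : v ∉ M) :
    setNbhd (deleteVert G v) (Subtype.val ⁻¹' M) = ∅ ↔ setNbhd G M ⊆ {v} := by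
  rw [setNbhd_deleteVert hvM, Set.eq_empty_iff_forall_notMem]
  exact ⟨fun h s hs => by_contra fun hsv => h ⟨s, hsv⟩ hs, fun h u hu => u.2 (h hu)⟩

lemma hasFullComponent_deleteVert_iff (hvM : v ∉ M) :
    HasFullComponent (deleteVert G v) (Subtype.val ⁻¹' M) ↔
      ∃ b ∉ M, b ∉ insert v (setNbhd G M) ∧
        ∀ s ∈ setNbhd G M, s ≠ v → AdjComponent G (insert v (setNbhd G M)) b s := by
  rw [HasFullComponent, setNbhd_deleteVert hvM]
  constructor
  · rintro ⟨b, hbM, hbN, hfull⟩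
    exact ⟨b, hbM, fun h => h.elim b.2 hbN,
      fun s hs hsv => adjComponent_deleteVert_iff.1 (hfull ⟨s, hsv⟩ hs)⟩
  · rintro ⟨b, hbM, hbN, hfull⟩
    have hbv : b ≠ v := fun h => hbN (h ▸ Set.mem_insert b _)
    exact ⟨⟨b, hbv⟩, hbM, fun h => hbN (Set.mem_insert_of_mem v h),
      fun s hs => adjComponent_deleteVert_iff.2 (hfull s hs s.2)⟩

lemma isClique_deleteVert_iff {Y : Set V} (hvY : v ∉ Y) :
    (deleteVert G v).IsClique (Subtype.val ⁻¹' Y) ↔ G.IsClique Y := by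
  refine ⟨fun h x hx y hy hxy => ?_, fun h x hx y hy hxy => h hx hy (Subtype.val_injective.ne hxy)⟩
  exact h (show (⟨x, ne_of_mem_of_not_mem hx hvY⟩ : {x // x ≠ v}) ∈ Subtype.val ⁻¹' Y from hx)
    (show (⟨y, ne_of_mem_of_not_mem hy hvY⟩ : {x // x ≠ v}) ∈ Subtype.val ⁻¹' Y from hy)
    fun h => hxy (congrArg Subtype.val h)

lemma isModule_deleteVert_iff {Y : Set V} (hvY : v ∉ Y) :
    IsModule (deleteVert G v) (Subtype.val ⁻¹' Y) ↔
      ∀ u ∉ Y, u ≠ v → (∀ x ∈ Y, G.Adj u x) ∨ ∀ x ∈ Y, ¬ G.Adj u x := by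
  constructor
  · intro h u huY huv
    exact (h ⟨u, huv⟩ huY).imp (fun h x hx => h ⟨x, ne_of_mem_of_not_mem hx hvY⟩ hx)
      (fun h x hx => h ⟨x, ne_of_mem_of_not_mem hx hvY⟩ hx)
  · intro h u huY
    exact (h u huY u.2).imp (fun h x hx => h x hx) (fun h x hx => h x hx)

lemma Avoidable.isCliqueModule_deleteVert_iff (hav : Avoidable G v) (hnm : ¬ Moplicial G v)
    {Y : Set V} (hvY : v ∉ Y) :
    IsCliqueModule (deleteVert G v) (Subtype.val ⁻¹' Y) ↔ IsCliqueModule G Y := by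
  rw [IsCliqueModule, IsCliqueModule, isClique_deleteVert_iff hvY, isModule_deleteVert_iff hvY]
  exact ⟨fun ⟨hcl, hmod⟩ => ⟨hcl, hav.isModule_of_forall_ne hnm hvY hcl hmod⟩,
    fun ⟨hcl, hmod⟩ => ⟨hcl, fun u huY _ => hmod u huY⟩⟩

lemma Avoidable.forall_isCliqueModule_deleteVert_iff (hav : Avoidable G v)
    (hnm : ¬ Moplicial G v) (hvM : v ∉ M) :
    (∀ Y', Subtype.val ⁻¹' M ⊆ Y' → IsCliqueModule (deleteVert G v) Y' → Y' = Subtype.val ⁻¹' M) ↔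
      ∀ Y, v ∉ Y → M ⊆ Y → IsCliqueModule G Y → Y = M := by
  constructor
  · intro h Y hvY hMY hY
    have hY' := h _ (Set.preimage_mono hMY) ((hav.isCliqueModule_deleteVert_iff hnm hvY).2 hY)
    ext x
    by_cases hxv : x = v
    · subst hxv
      exact iff_of_false hvY hvM
    · exact Set.ext_iff.1 hY' ⟨x, hxv⟩
  · intro h Y' hMY' hY'
    have hvY : v ∉ Subtype.val '' Y' := fun ⟨x, _, hx⟩ => x.2 hx
    rw [← Set.preimage_image_eq Y' Subtype.val_injective] at hY' ⊢
    refine congrArg _ (h _ hvY (fun x hx => ⟨⟨x, ne_of_mem_of_not_mem hx hvM⟩, hMY' hx, rfl⟩) ?_)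
    exact (hav.isCliqueModule_deleteVert_iff hnm hvY).1 hY'

lemma Avoidable.isMoplex_deleteVert_iff (hav : Avoidable G v) (hnm : ¬ Moplicial G v)
    (hvM : v ∉ M) :
    IsMoplex (deleteVert G v) (Subtype.val ⁻¹' M) ↔ M.Nonempty ∧ IsCliqueModule G M ∧
      (∀ Y, v ∉ Y → M ⊆ Y → IsCliqueModule G Y → Y = M) ∧
      (setNbhd (deleteVert G v) (Subtype.val ⁻¹' M) = ∅ ∨
        HasFullComponent (deleteVert G v) (Subtype.val ⁻¹' M)) := by
  have hne : (Subtype.val ⁻¹' M : Set {x : V // x ≠ v}).Nonempty ↔ M.Nonempty :=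
    ⟨fun ⟨x, hx⟩ => ⟨x, hx⟩, fun ⟨x, hx⟩ => ⟨⟨x, ne_of_mem_of_not_mem hx hvM⟩, hx⟩⟩
  rw [isMoplex_iff_hasFullComponent, hne, hav.isCliqueModule_deleteVert_iff hnm hvM,
    hav.forall_isCliqueModule_deleteVert_iff hnm hvM]

lemma Avoidable.setNbhd_eq_empty_or_hasFullComponent_deleteVert (hav : Avoidable G v)
    (hnm : ¬ Moplicial G v) (hne : M.Nonempty) (hvM : v ∉ M) (hM : IsModule G M)
    (hsep : setNbhd G M = ∅ ∨ HasFullComponent G M) :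
    setNbhd (deleteVert G v) (Subtype.val ⁻¹' M) = ∅ ∨
      HasFullComponent (deleteVert G v) (Subtype.val ⁻¹' M) := by
  rw [setNbhd_deleteVert_eq_empty_iff hvM, hasFullComponent_deleteVert_iff hvM]
  refine hsep.imp (fun h => by simp [h]) fun ⟨b, hbM, hbS, hb⟩ => ?_
  set S := setNbhd G M
  by_cases hvS : v ∈ S
  · rw [Set.insert_eq_of_mem hvS]
    exact ⟨b, hbM, hbS, fun s hs _ => hb s hs⟩
  by_cases hbv : ReachOutside G S b v
  · obtain ⟨m, hm⟩ := hne
    obtain ⟨d, hdM, hdS, hd⟩ := hav.exists_full_of_adjComponent hnm hM hm hvM hvS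
      fun s hs => (hb s hs).of_reachOutside hbv.symm
    exact ⟨d, hdM, hdS, fun s hs _ => hd s hs⟩
  have hbS' : ∀ u, ReachOutside G S b u → u ∉ ({v} : Set V) :=
    fun u hbu huv => hbv (Set.mem_singleton_iff.1 huv ▸ hbu)
  refine ⟨b, hbM, ?_, fun s hs _ => ?_⟩
  · rintro (h | h)
    exacts [hbv (h ▸ .refl hbS), hbS h]
  obtain ⟨y, hby, hsy⟩ := hb s hs
  exact ⟨y, (hby.union_of_forall hbS').mono
    (Set.insert_subset_iff.2 ⟨.inr rfl, Set.subset_union_left⟩), hsy⟩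

lemma Avoidable.setNbhd_eq_empty_or_hasFullComponent_of_deleteVert (hav : Avoidable G v)
    (hnm : ¬ Moplicial G v) (hvM : v ∉ M) (hM : IsCliqueModule G M)
    (hmax : ∀ Y, M ⊆ Y → IsCliqueModule G Y → Y = M)
    (hsep : setNbhd (deleteVert G v) (Subtype.val ⁻¹' M) = ∅ ∨
      HasFullComponent (deleteVert G v) (Subtype.val ⁻¹' M)) :
    setNbhd G M = ∅ ∨ HasFullComponent G M := by
  rw [setNbhd_deleteVert_eq_empty_iff hvM, hasFullComponent_deleteVert_iff hvM] at hsep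
  set S := setNbhd G M
  by_cases hvS : v ∉ S
  · rcases hsep with h | ⟨b, hbM, hbN, hb⟩
    · exact .inl <| Set.eq_empty_of_forall_notMem fun s hs =>
        hvS (Set.mem_singleton_iff.1 (h hs) ▸ hs)
    · exact .inr ⟨b, hbM, fun h => hbN (.inr h),
        fun s hs => (hb s hs (ne_of_mem_of_not_mem hs hvS)).mono (Set.subset_insert v S)⟩
  rw [not_not] at hvS
  rw [Set.insert_eq_of_mem hvS] at hsep
  refine .inr ?_
  by_cases hSN : S ⊆ closedNbhd G v
  · have hnot : ¬ IsCliqueModule G (insert v M) := fun h =>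
      hvM (hmax _ (Set.subset_insert v M) h ▸ Set.mem_insert v M)
    obtain ⟨z, hzM, hvz, hzS⟩ := hM.exists_adj_of_not_isCliqueModule_insert hvS hSN hnot
    exact ⟨z, hzM, hzS, fun s hs => hav.adjComponent_of_subset_closedNbhd hSN hzS hvz hs⟩
  obtain ⟨s₁, hs₁, hs₁N⟩ := Set.not_subset.1 hSN
  rcases hsep with h | ⟨b, hbM, hbS, hb⟩
  · obtain rfl : s₁ = v := h hs₁
    exact absurd (Set.mem_insert s₁ _) hs₁N
  by_cases hbv : AdjComponent G S b v
  · refine ⟨b, hbM, hbS, fun s hs => ?_⟩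
    by_cases hsv : s = v
    · exact hsv ▸ hbv
    · exact hb s hs hsv
  · obtain ⟨m, hm, -⟩ := hvS.2
    exact absurd (hav.moplicial_of_not_adjComponent hM.2 hm hvS hs₁ hs₁N hbv hb) hnm

lemma Avoidable.subset_insert_of_isCliqueModule (hav : Avoidable G v) (hnm : ¬ Moplicial G v)
    (hvM : v ∉ M) (hmax : ∀ Y, v ∉ Y → M ⊆ Y → IsCliqueModule G Y → Y = M)
    {Y : Set V} (hMY : M ⊆ Y) (hY : IsCliqueModule G Y) : Y ⊆ insert v M :=
  Set.sdiff_singleton_subset_iff.1 <| (hmax (Y \ {v}) (fun h => h.2 rfl)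
    (fun _ hx => ⟨hMY hx, ne_of_mem_of_not_mem hx hvM⟩)
    (hav.isCliqueModule_sdiff_singleton hnm hY)).le

lemma Avoidable.isMoplex_insert (hav : Avoidable G v) (hnm : ¬ Moplicial G v)
    (hvM : v ∉ M) (hne : M.Nonempty)
    (hmax : ∀ Y, v ∉ Y → M ⊆ Y → IsCliqueModule G Y → Y = M)
    (hsep : setNbhd (deleteVert G v) (Subtype.val ⁻¹' M) = ∅ ∨
      HasFullComponent (deleteVert G v) (Subtype.val ⁻¹' M))
    (hA : IsCliqueModule G (insert v M)) : IsMoplex G (insert v M) := by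
  rw [setNbhd_deleteVert_eq_empty_iff hvM, hasFullComponent_deleteVert_iff hvM] at hsep
  refine isMoplex_iff_hasFullComponent.2 ⟨Set.insert_nonempty v M, hA, fun Z hAZ hZ => ?_, ?_⟩
  · exact (hav.subset_insert_of_isCliqueModule hnm hvM hmax
      ((Set.subset_insert v M).trans hAZ) hZ).antisymm hAZ
  rw [HasFullComponent, setNbhd_insert hA.2 hne]
  rcases hsep with h | ⟨b, hbM, hbN, hb⟩
  · exact .inl (Set.sdiff_eq_empty.2 h)
  · refine .inr ⟨b, ?_, fun h => hbN (.inr h.1), fun s hs => ?_⟩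
    · rintro (h | h)
      exacts [hbN (.inl h), hbM h]
    · exact (hb s hs.1 hs.2).mono (Set.sdiff_subset.trans (Set.subset_insert v _))

lemma Avoidable.forall_isCliqueModule_of_forall_notMem (hav : Avoidable G v)
    (hnm : ¬ Moplicial G v) (hvM : v ∉ M) (hne : M.Nonempty)
    (hmax : ∀ Y, v ∉ Y → M ⊆ Y → IsCliqueModule G Y → Y = M)
    (hsep : setNbhd (deleteVert G v) (Subtype.val ⁻¹' M) = ∅ ∨
      HasFullComponent (deleteVert G v) (Subtype.val ⁻¹' M)) :
    ∀ Y, M ⊆ Y → IsCliqueModule G Y → Y = M := by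
  intro Y hMY hY
  have hYM := hav.subset_insert_of_isCliqueModule hnm hvM hmax hMY hY
  by_cases hvY : v ∈ Y
  · have hYeq : Y = insert v M := hYM.antisymm (Set.insert_subset hvY hMY)
    exact absurd ⟨_, hav.isMoplex_insert hnm hvM hne hmax hsep (hYeq ▸ hY), Set.mem_insert v M⟩ hnm
  · exact ((Set.subset_insert_iff_of_notMem hvY).1 hYM).antisymm hMY

theorem moplex_iff_moplex_deleteAvoidable_general {V : Type*} (G : SimpleGraph V)
    (v : V) (hav : Avoidable G v) (hnm : ¬ Moplicial G v)
    (M : Set V) (hvM : v ∉ M) :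
    IsMoplex G M ↔
      IsMoplex (G.comap (Subtype.val : {x : V // x ≠ v} → V))
        {x : {x : V // x ≠ v} | (x : V) ∈ M} := by
  change IsMoplex G M ↔ IsMoplex (deleteVert G v) (Subtype.val ⁻¹' M)
  rw [isMoplex_iff_hasFullComponent, hav.isMoplex_deleteVert_iff hnm hvM]
  constructor
  · rintro ⟨hne, hM, hmax, hsep⟩
    exact ⟨hne, hM, fun Y _ => hmax Y,
      hav.setNbhd_eq_empty_or_hasFullComponent_deleteVert hnm hne hvM hM.2 hsep⟩
  · rintro ⟨hne, hM, hmax, hsep⟩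
    have hmax' := hav.forall_isCliqueModule_of_forall_notMem hnm hvM hne hmax hsep
    exact ⟨hne, hM, hmax',
      hav.setNbhd_eq_empty_or_hasFullComponent_of_deleteVert hnm hvM hM hmax' hsep⟩

/-- If `v` is an avoidable non-moplicial vertex and `v ∉ M`, then `M` is a moplex of `G`
iff the corresponding set is a moplex of `G - v`. -/
theorem moplex_iff_moplex_deleteAvoidable {V : Type*} [Fintype V] (G : SimpleGraph V)
    (v : V) (hav : Avoidable G v) (hnm : ¬ Moplicial G v)
    (M : Set V) (hvM : v ∉ M) :
    IsMoplex G M ↔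
      IsMoplex (G.comap (Subtype.val : {x : V // x ≠ v} → V))
        {x : {x : V // x ≠ v} | (x : V) ∈ M} :=
  moplex_iff_moplex_deleteAvoidable_general G v hav hnm M hvM

end MoplexPaper
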